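/- Let n ∈ ℕ, let h: ℝ^n → ℝ be a positively homogeneous function that is bounded on the unit sphere, let Ψ be a nonempty family of superlinear maps ℝ^n → ℝ with h(x) = sup_{ψ ∈ Ψ} ψ(x) for all x ∈ ℝ^n, let E be a Dedekind complete vector lattice, and let f_1,…,f_n ∈ E. Then the supremum of the set { inf_{a ∈ ∂ψ(0)} Σ_{i=1}^n a_i f_i : ψ ∈ Ψ } exists in E (each inner infimum exists in E since E is Dedekind complete). -/

import Mathlib

open scoped BigOperators

/-- A sublinear map on ℝⁿ. -/
def Sublinear {n : ℕ} (φ : EuclideanSpace ℝ (Fin n) → ℝ) : Prop :=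
  (∀ x y, φ (x + y) ≤ φ x + φ y) ∧ ∀ c : ℝ, 0 ≤ c → ∀ x, φ (c • x) = c * φ x

/-- A superlinear map on ℝⁿ: `ψ` is superlinear iff `-ψ` is sublinear. -/
def Superlinear {n : ℕ} (ψ : EuclideanSpace ℝ (Fin n) → ℝ) : Prop :=
  Sublinear (fun x => -ψ x)

/-- The superdifferential of a superlinear map ψ at 0. -/
def superdiff {n : ℕ} (ψ : EuclideanSpace ℝ (Fin n) → ℝ) :
    Set (EuclideanSpace ℝ (Fin n)) :=
  {a | ∀ x, ψ x ≤ ∑ i, a i * x i}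

section Aux

variable {E : Type*} [Lattice E] [AddCommGroup E] [Module ℝ E]
  [CovariantClass E E (· + ·) (· ≤ ·)] [PosSMulMono ℝ E]

lemma aux_sum_le {ι : Type*} (s : Finset ι) (g₁ g₂ : ι → E)
    (hle : ∀ i ∈ s, g₁ i ≤ g₂ i) : ∑ i ∈ s, g₁ i ≤ ∑ i ∈ s, g₂ i := by
  classical
  induction s using Finset.induction with
  | empty => simp
  | insert _ _ hx ih =>
    rw [Finset.sum_insert hx, Finset.sum_insert hx]
    exact add_le_add (hle _ (Finset.mem_insert_self _ _))
      (ih fun i hi => hle i (Finset.mem_insert_of_mem hi))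

lemma aux_smul_le {a C : ℝ} (h : |a| ≤ C) (f : E) : a • f ≤ C • |f| := by
  have h2 : |a| • |f| ≤ C • |f| := by
    have h3 : (0 : E) ≤ (C - |a|) • |f| :=
      smul_nonneg (by linarith) (abs_nonneg f)
    rw [← sub_nonneg, ← sub_smul]
    exact h3
  have h1 : a • f ≤ |a| • |f| := by
    rcases le_or_gt 0 a with ha | ha
    · rw [abs_of_nonneg ha]
      exact smul_le_smul_of_nonneg_left (le_abs_self f) ha
    · rw [abs_of_neg ha]
      have hfe : a • f = (-a) • (-f) := by rw [neg_smul, smul_neg, neg_neg]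
      rw [hfe]
      exact smul_le_smul_of_nonneg_left (neg_le_abs f) (by linarith)
  exact h1.trans h2

lemma aux_neg_smul_le {a C : ℝ} (h : |a| ≤ C) (f : E) : -(C • |f|) ≤ a • f := by
  have h1 : (-a) • f ≤ C • |f| := aux_smul_le (by rwa [abs_neg]) f
  rw [neg_smul] at h1
  exact neg_le.mp h1

end Aux

lemma euclid_eq_sum {n : ℕ} (x : EuclideanSpace ℝ (Fin n)) :
    x = ∑ i, x i • EuclideanSpace.single i (1 : ℝ) := by
  ext j
  rw [WithLp.ofLp_sum, Finset.sum_apply]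
  simp [EuclideanSpace.single_apply]

lemma sum_mul_single {n : ℕ} (a : EuclideanSpace ℝ (Fin n)) (i : Fin n) :
    ∑ j, a j * (EuclideanSpace.single i (1 : ℝ)) j = a i := by
  simp [EuclideanSpace.single_apply]

lemma linear_apply_sum {n : ℕ} (g : EuclideanSpace ℝ (Fin n) →ₗ[ℝ] ℝ)
    (x : EuclideanSpace ℝ (Fin n)) :
    g x = ∑ i, g (EuclideanSpace.single i 1) * x i := by
  conv_lhs => rw [euclid_eq_sum x]
  rw [map_sum]
  simp only [map_smul, smul_eq_mul]
  exact Finset.sum_congr rfl fun i _ => mul_comm _ _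

/-- Key lemma: a superlinear map bounded above by `M‖·‖` has an element of its
superdifferential at `0` with all coordinates bounded by `M` in absolute value. -/
lemma exists_small_superdiff {n : ℕ} {ψ : EuclideanSpace ℝ (Fin n) → ℝ}
    (hsl : Superlinear ψ) {M : ℝ} (hM : 0 ≤ M) (hle : ∀ x, ψ x ≤ M * ‖x‖) :
    ∃ a ∈ superdiff ψ, ∀ i, |a i| ≤ M := by
  obtain ⟨hadd, hhom⟩ := hsl
  have hψ0 : ψ 0 = 0 := by
    have h0 := hhom 0 le_rfl 0
    simp only [zero_smul, zero_mul] at h0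
    linarith [h0]
  set N : EuclideanSpace ℝ (Fin n) → ℝ :=
    fun x => sInf (Set.range fun y => -ψ y + M * ‖x - y‖) with hNdef
  have hmem : ∀ x y : EuclideanSpace ℝ (Fin n),
      -ψ y + M * ‖x - y‖ ∈ Set.range fun y => -ψ y + M * ‖x - y‖ :=
    fun x y => ⟨y, rfl⟩
  have hlb : ∀ x, ∀ z ∈ Set.range fun y => -ψ y + M * ‖x - y‖, -(M * ‖x‖) ≤ z := by
    rintro x z ⟨y, rfl⟩
    show -(M * ‖x‖) ≤ -ψ y + M * ‖x - y‖
    have h1 : ψ y ≤ M * ‖y‖ := hle y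
    have h2 : ‖y‖ - ‖x‖ ≤ ‖x - y‖ := by
      have h3 := norm_sub_norm_le y x
      rwa [norm_sub_rev] at h3
    nlinarith [norm_nonneg x, norm_nonneg y]
  have hbdd : ∀ x, BddBelow (Set.range fun y => -ψ y + M * ‖x - y‖) :=
    fun x => ⟨-(M * ‖x‖), hlb x⟩
  have hne : ∀ x, (Set.range fun y => -ψ y + M * ‖x - y‖).Nonempty :=
    fun x => ⟨_, hmem x 0⟩
  have hNle : ∀ x y, N x ≤ -ψ y + M * ‖x - y‖ := fun x y => csInf_le (hbdd x) (hmem x y)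
  have hNlb : ∀ x, -(M * ‖x‖) ≤ N x := fun x => le_csInf (hne x) (hlb x)
  have hNnorm : ∀ x, N x ≤ M * ‖x‖ := by
    intro x
    have h1 := hNle x 0
    rwa [hψ0, neg_zero, zero_add, sub_zero] at h1
  have N_add : ∀ x y, N (x + y) ≤ N x + N y := by
    intro x y
    have key : ∀ u v, N (x + y) ≤ (-ψ u + M * ‖x - u‖) + (-ψ v + M * ‖y - v‖) := by
      intro u v
      have h1 := hNle (x + y) (u + v)
      have h2 : -ψ (u + v) ≤ -ψ u + -ψ v := hadd u v
      have h3 : ‖x + y - (u + v)‖ ≤ ‖x - u‖ + ‖y - v‖ := by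
        have h4 : x + y - (u + v) = (x - u) + (y - v) := by abel
        rw [h4]; exact norm_add_le _ _
      have h5 : M * ‖x + y - (u + v)‖ ≤ M * (‖x - u‖ + ‖y - v‖) :=
        mul_le_mul_of_nonneg_left h3 hM
      nlinarith
    have h6 : N (x + y) - N y ≤ N x := by
      apply le_csInf (hne x)
      rintro z ⟨u, rfl⟩
      show N (x + y) - N y ≤ -ψ u + M * ‖x - u‖
      have h7 : N (x + y) - (-ψ u + M * ‖x - u‖) ≤ N y := by
        apply le_csInf (hne y)
        rintro w ⟨v, rfl⟩
        show N (x + y) - (-ψ u + M * ‖x - u‖) ≤ -ψ v + M * ‖y - v‖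
        linarith [key u v]
      linarith
    linarith
  have N_aux : ∀ c : ℝ, 0 < c → ∀ x, N (c • x) ≤ c * N x := by
    intro c hc x
    have h1 : c⁻¹ * N (c • x) ≤ N x := by
      apply le_csInf (hne x)
      rintro z ⟨y, rfl⟩
      show c⁻¹ * N (c • x) ≤ -ψ y + M * ‖x - y‖
      have h2 := hNle (c • x) (c • y)
      have h3 : -ψ (c • y) = c * (-ψ y) := hhom c hc.le y
      have h4 : ‖c • x - c • y‖ = c * ‖x - y‖ := by
        rw [← smul_sub, norm_smul, Real.norm_eq_abs, abs_of_pos hc]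
      rw [h3, h4] at h2
      have h5 : N (c • x) ≤ c * (-ψ y + M * ‖x - y‖) := by nlinarith
      have h6 : c⁻¹ * N (c • x) ≤ c⁻¹ * (c * (-ψ y + M * ‖x - y‖)) :=
        mul_le_mul_of_nonneg_left h5 (inv_nonneg.2 hc.le)
      rwa [← mul_assoc, inv_mul_cancel₀ hc.ne', one_mul] at h6
    calc N (c • x) = c * (c⁻¹ * N (c • x)) := by
          rw [← mul_assoc, mul_inv_cancel₀ hc.ne', one_mul]
      _ ≤ c * N x := mul_le_mul_of_nonneg_left h1 hc.le
  have N_hom : ∀ c : ℝ, 0 < c → ∀ x, N (c • x) = c * N x := by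
    intro c hc x
    refine le_antisymm (N_aux c hc x) ?_
    have h1 := N_aux c⁻¹ (inv_pos.2 hc) (c • x)
    rw [inv_smul_smul₀ hc.ne'] at h1
    have h2 : c * N x ≤ c * (c⁻¹ * N (c • x)) := mul_le_mul_of_nonneg_left h1 hc.le
    rwa [← mul_assoc, mul_inv_cancel₀ hc.ne', one_mul] at h2
  obtain ⟨g, -, hg⟩ := exists_extension_of_le_sublinear
      (⊥ : EuclideanSpace ℝ (Fin n) →ₗ.[ℝ] ℝ) N N_hom N_add (by
    rintro ⟨x, hx⟩
    have hx0 : x = 0 := (Submodule.mem_bot ℝ).1 hx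
    have h0 : (0 : ℝ) ≤ N 0 := by
      have := hNlb 0
      simpa using this
    subst hx0
    exact h0)
  refine ⟨WithLp.toLp 2 (fun i => -(g (EuclideanSpace.single i 1))), ?_, ?_⟩
  · intro x
    have h1 : g x ≤ -ψ x := by
      have h2 := hg x
      have h3 := hNle x x
      simp only [sub_self, norm_zero, mul_zero, add_zero] at h3
      linarith
    have h4 : ψ x ≤ -g x := by linarith
    have h5 : -g x = ∑ i, -(g (EuclideanSpace.single i 1)) * x i := by
      rw [linear_apply_sum g x, ← Finset.sum_neg_distrib]
      exact Finset.sum_congr rfl fun i _ => by ring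
    rw [← h5]
    exact h4
  · intro i
    have he : ‖(EuclideanSpace.single i (1 : ℝ) : EuclideanSpace ℝ (Fin n))‖ = 1 := by
      rw [EuclideanSpace.norm_single]; norm_num
    have h1 : g (EuclideanSpace.single i 1) ≤ M := by
      have := (hg _).trans (hNnorm (EuclideanSpace.single i 1))
      rwa [he, mul_one] at this
    have h2 : -(g (EuclideanSpace.single i 1)) ≤ M := by
      have h3 : g (-(EuclideanSpace.single i 1)) ≤ M := by
        have := (hg _).trans (hNnorm (-(EuclideanSpace.single i 1)))
        rwa [norm_neg, he, mul_one] at this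
      rwa [map_neg] at h3
    rw [abs_le, PiLp.toLp_apply]
    constructor <;> simp only [neg_neg, neg_le] <;> linarith

/-- Let `h : ℝⁿ → ℝ` be positively homogeneous and bounded on the
unit sphere, `Ψ` a nonempty family of superlinear maps with
`h(x) = sup_{ψ ∈ Ψ} ψ(x)` for all `x`, `E` a Dedekind complete vector lattice
and `f₁,…,fₙ ∈ E`.  Then the supremum of
`{ inf_{a ∈ ∂ψ(0)} Σ aᵢ fᵢ : ψ ∈ Ψ }` exists in `E` (the inner infima exist in
`E` since `E` is Dedekind complete). -/
theorem stmt11 {n : ℕ} {E : Type*} [Lattice E] [AddCommGroup E] [Module ℝ E]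
    [CovariantClass E E (· + ·) (· ≤ ·)] [PosSMulMono ℝ E]
    (hDCsup : ∀ S : Set E, S.Nonempty → BddAbove S → ∃ s, IsLUB S s)
    (hDCinf : ∀ S : Set E, S.Nonempty → BddBelow S → ∃ s, IsGLB S s)
    (h : EuclideanSpace ℝ (Fin n) → ℝ)
    (hph : ∀ c : ℝ, 0 ≤ c → ∀ x, h (c • x) = c * h x)
    (hbdd : ∃ m M : ℝ, ∀ x : EuclideanSpace ℝ (Fin n), ‖x‖ = 1 → m ≤ h x ∧ h x ≤ M)
    (Ψ : Set (EuclideanSpace ℝ (Fin n) → ℝ)) (hΨne : Ψ.Nonempty)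
    (hΨ : ∀ ψ ∈ Ψ, Superlinear ψ)
    (hrep : ∀ x, IsLUB {y : ℝ | ∃ ψ ∈ Ψ, y = ψ x} (h x))
    (f : Fin n → E) :
    ∃ g, IsLUB {s : E | ∃ ψ ∈ Ψ,
      IsGLB {x : E | ∃ a ∈ superdiff ψ, x = ∑ i, a i • f i} s} g := by
  obtain ⟨m, M, hmM⟩ := hbdd
  set M' : ℝ := max M 0 with hM'def
  have hM' : (0 : ℝ) ≤ M' := le_max_right _ _
  have hxle : ∀ ψ ∈ Ψ, ∀ x, ψ x ≤ M' * ‖x‖ := by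
    intro ψ hψm x
    have h1 : ψ x ≤ h x := (hrep x).1 ⟨ψ, hψm, rfl⟩
    rcases eq_or_ne x 0 with rfl | hx
    · have h0 : h 0 = 0 := by
        have := hph 0 le_rfl 0
        simpa using this
      rw [h0] at h1
      simpa using h1
    · have hu : ‖(‖x‖⁻¹ : ℝ) • x‖ = 1 := norm_smul_inv_norm hx
      have hxpos : (0 : ℝ) < ‖x‖ := norm_pos_iff.2 hx
      have h2 : h x = ‖x‖ * h ((‖x‖⁻¹ : ℝ) • x) := by
        have h3 := hph ‖x‖ hxpos.le ((‖x‖⁻¹ : ℝ) • x)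
        rw [smul_smul, mul_inv_cancel₀ hxpos.ne', one_smul] at h3
        exact h3
      have h3 := (hmM _ hu).2
      have h4 : h ((‖x‖⁻¹ : ℝ) • x) ≤ M' := h3.trans (le_max_left M 0)
      calc ψ x ≤ h x := h1
        _ = ‖x‖ * h ((‖x‖⁻¹ : ℝ) • x) := h2
        _ ≤ ‖x‖ * M' := mul_le_mul_of_nonneg_left h4 hxpos.le
        _ = M' * ‖x‖ := mul_comm _ _
  have hGLBex : ∀ ψ ∈ Ψ,
      ∃ s, IsGLB {x : E | ∃ a ∈ superdiff ψ, x = ∑ i, a i • f i} s := by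
    intro ψ hψm
    obtain ⟨a₀, ha₀mem, ha₀bd⟩ := exists_small_superdiff (hΨ ψ hψm) hM' (hxle ψ hψm)
    apply hDCinf
    · exact ⟨∑ i, a₀ i • f i, a₀, ha₀mem, rfl⟩
    · refine ⟨-∑ i, (max |ψ (EuclideanSpace.single i 1)|
        |ψ (-(EuclideanSpace.single i 1))|) • |f i|, ?_⟩
      rintro x ⟨a, hamem, rfl⟩
      have hib : ∀ i, |a i| ≤ max |ψ (EuclideanSpace.single i 1)|
          |ψ (-(EuclideanSpace.single i 1))| := by
        intro i
        have h1 : ψ (EuclideanSpace.single i 1) ≤ a i := by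
          have := hamem (EuclideanSpace.single i 1)
          rwa [sum_mul_single] at this
        have h2 : ψ (-(EuclideanSpace.single i 1)) ≤ -a i := by
          have h3 := hamem (-(EuclideanSpace.single i 1))
          have h4 : ∑ j, a j * (-(EuclideanSpace.single i (1:ℝ))) j = -a i := by
            have h5 : ∀ j, (-(EuclideanSpace.single i (1:ℝ))) j
                = -((EuclideanSpace.single i (1:ℝ)) j) := fun j => rfl
            calc ∑ j, a j * (-(EuclideanSpace.single i (1:ℝ))) j
                = -∑ j, a j * (EuclideanSpace.single i (1:ℝ)) j := by
                  rw [← Finset.sum_neg_distrib]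
                  exact Finset.sum_congr rfl fun j _ => by rw [h5 j]; ring
              _ = -a i := by rw [sum_mul_single]
          rwa [h4] at h3
        rw [abs_le]
        constructor
        · have := neg_abs_le (ψ (EuclideanSpace.single i 1))
          have h6 := le_max_left |ψ (EuclideanSpace.single i 1)|
            |ψ (-(EuclideanSpace.single i 1))|
          linarith
        · have := neg_abs_le (ψ (-(EuclideanSpace.single i 1)))
          have h6 := le_max_right |ψ (EuclideanSpace.single i 1)|
            |ψ (-(EuclideanSpace.single i 1))|
          have h7 := le_abs_self (ψ (-(EuclideanSpace.single i 1)))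
          linarith
      calc -∑ i, (max |ψ (EuclideanSpace.single i 1)|
              |ψ (-(EuclideanSpace.single i 1))|) • |f i|
          = ∑ i, -((max |ψ (EuclideanSpace.single i 1)|
              |ψ (-(EuclideanSpace.single i 1))|) • |f i|) := by
            rw [← Finset.sum_neg_distrib]
        _ ≤ ∑ i, a i • f i := aux_sum_le _ _ _ fun i _ => aux_neg_smul_le (hib i) (f i)
  apply hDCsup
  · obtain ⟨ψ₀, hψ₀⟩ := hΨne
    obtain ⟨s, hs⟩ := hGLBex ψ₀ hψ₀
    exact ⟨s, ψ₀, hψ₀, hs⟩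
  · refine ⟨∑ i, M' • |f i|, ?_⟩
    rintro s ⟨ψ, hψm, hs⟩
    obtain ⟨a₀, ha₀mem, ha₀bd⟩ := exists_small_superdiff (hΨ ψ hψm) hM' (hxle ψ hψm)
    have h1 : s ≤ ∑ i, a₀ i • f i := hs.1 ⟨a₀, ha₀mem, rfl⟩
    exact h1.trans (aux_sum_le _ _ _ fun i _ => aux_smul_le (ha₀bd i) (f i))
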